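/- arXiv:2409.15039 — 4 statements merged into one kernel-verified Lean document; each statement's English description precedes it below -/
import Mathlib

section
/- Let D ⊆ ℝⁿ be a measurable set and E ⊆ D a measurable subset. Let (g_k) be a sequence of measurable functions on D satisfying g_k ≤ 0 almost everywhere on E, let g : D → ℝ be continuous, and assume that the essential supremum over D \ E of |g_k − g| tends to 0 as k → ∞. Let K ⊆ D be a compact set on which g is strictly negative. Then there exists k₀ such that for all k ≥ k₀ one has g_k ≤ 0 almost everywhere on K. -/
open Set Topology MeasureTheory Filter
open scoped ENNReal

/-- Lemma 2.11: if `g_k ≤ 0` a.e. on `E`, `g_k → g` in `L^∞(D \ E)` (essential sup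
of `|g_k - g|` over `D \ E` tends to `0`), `g` is continuous on `D`, and `K ⊆ D` is a
compact set on which `g < 0`, then eventually `g_k ≤ 0` a.e. on `K`. -/
theorem eventually_nonpos_ae_on_compact
    {n : ℕ} (D E : Set (EuclideanSpace ℝ (Fin n)))
    (hD : MeasurableSet D) (hE : MeasurableSet E) (hED : E ⊆ D)
    (gk : ℕ → EuclideanSpace ℝ (Fin n) → ℝ) (hgkm : ∀ k, Measurable (gk k))
    (g : EuclideanSpace ℝ (Fin n) → ℝ) (hg : ContinuousOn g D)
    (hneg : ∀ k, ∀ᵐ x ∂(volume.restrict E), gk k x ≤ 0)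
    (hconv : Tendsto
      (fun k => eLpNorm (fun x => gk k x - g x) ⊤ (volume.restrict (D \ E)))
      atTop (nhds 0))
    (K : Set (EuclideanSpace ℝ (Fin n))) (hK : IsCompact K) (hKD : K ⊆ D)
    (hKneg : ∀ x ∈ K, g x < 0) :
    ∃ k₀ : ℕ, ∀ k ≥ k₀, ∀ᵐ x ∂(volume.restrict K), gk k x ≤ 0 := by
  rcases K.eq_empty_or_nonempty with rfl | hKne
  · exact ⟨0, fun k _ => by simp⟩
  -- sup of g on K is negative
  obtain ⟨x₀, hx₀K, hx₀⟩ := hK.exists_isMaxOn hKne (hg.mono hKD)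
  set δ : ℝ := -g x₀ with hδdef
  have hδpos : 0 < δ := by simpa [hδdef] using hKneg x₀ hx₀K
  have h0 : (0 : ℝ≥0∞) < ENNReal.ofReal δ := by simpa using hδpos
  have hev : ∀ᶠ k in atTop,
      eLpNorm (fun x => gk k x - g x) ⊤ (volume.restrict (D \ E)) < ENNReal.ofReal δ :=
    hconv.eventually (gt_mem_nhds h0)
  obtain ⟨k₀, hk₀⟩ := eventually_atTop.mp hev
  refine ⟨k₀, fun k hk => ?_⟩
  -- a.e. bound on D \ E
  have hbound : ∀ᵐ x ∂(volume.restrict (D \ E)), |gk k x - g x| < δ := by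
    have h1 : ∀ᵐ x ∂(volume.restrict (D \ E)),
        (‖gk k x - g x‖₊ : ℝ≥0∞) ≤ eLpNormEssSup (fun x => gk k x - g x)
          (volume.restrict (D \ E)) := ae_le_eLpNormEssSup
    have h2 := hk₀ k hk
    rw [eLpNorm_exponent_top] at h2
    filter_upwards [h1] with x hx
    have h3 : (‖gk k x - g x‖₊ : ℝ≥0∞) < ENNReal.ofReal δ := lt_of_le_of_lt hx h2
    rw [← enorm_eq_nnnorm, ← ofReal_norm, ENNReal.ofReal_lt_ofReal_iff hδpos] at h3
    simpa [Real.norm_eq_abs] using h3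
  -- push to full-space a.e. implications
  have hE' : ∀ᵐ x ∂(volume : Measure (EuclideanSpace ℝ (Fin n))),
      x ∈ E → gk k x ≤ 0 := ae_imp_of_ae_restrict (hneg k)
  have hDE' : ∀ᵐ x ∂(volume : Measure (EuclideanSpace ℝ (Fin n))),
      x ∈ D \ E → |gk k x - g x| < δ := ae_imp_of_ae_restrict hbound
  have hae : ∀ᵐ x ∂(volume : Measure (EuclideanSpace ℝ (Fin n))),
      x ∈ K → gk k x ≤ 0 := by
    filter_upwards [hE', hDE'] with x hxE hxDE hxK
    by_cases hxE' : x ∈ E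
    · exact hxE hxE'
    · have hx : x ∈ D \ E := ⟨hKD hxK, hxE'⟩
      have h1 := hxDE hx
      have h2 : g x ≤ g x₀ := hx₀ hxK
      have := abs_lt.mp h1
      linarith [this.2]
  filter_upwards [ae_restrict_of_ae hae, ae_restrict_mem hK.measurableSet] with x h1 h2
  exact h1 h2
end

section
/- Let g : ℝⁿ → ℝ be Lipschitz continuous with constant L > 0 and let Z ⊆ {x : g(x) = 0} be a nonempty set. Let δ > 0 and 0 < λ ≤ δ/(2L), and set M := {x ∈ ℝⁿ : dist(x, Z) ≤ λ/2}. Let (g_k) be continuously differentiable functions satisfying ‖∇g_k(x)‖ + |g_k(x)| ≥ δ for all x ∈ M and all k, and sup_{x ∈ M} |g_k(x) − g(x)| → 0 as k → ∞. Then there exists k₀ such that for all k ≥ k₀ and all x ∈ M one has ‖∇g_k(x)‖ ≥ δ/2. In particular, for k ≥ k₀ the function g_k has no local extremum point in the interior of M. -/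
/-!
On the tube, `|g| ≤ L · λ/2 ≤ δ/4` because `g` vanishes on `Z`. Once `g_k` is uniformly
`δ/4`-close to `g` there, `|g_k| < δ/2`, so the nondegeneracy `‖∇g_k‖ + |g_k| ≥ δ` leaves
at least `δ/2` for the gradient, which therefore cannot vanish at a local extremum.
-/

open Set Topology Filter Metric

theorem abs_le_mul_infDist_of_eq_zero_on {α : Type*} [PseudoMetricSpace α] {g : α → ℝ} {L : ℝ}
    (hL : 0 < L) (hLip : ∀ a b, |g a - g b| ≤ L * dist a b) {Z : Set α} (hZ : Z.Nonempty)
    (hZ0 : ∀ z ∈ Z, g z = 0) (x : α) : |g x| ≤ L * infDist x Z := by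
  rw [← div_le_iff₀' hL, le_infDist hZ]
  intro z hz
  rw [div_le_iff₀' hL]
  simpa [hZ0 z hz] using hLip x z

theorem IsLocalExtr.gradient_eq_zero {F : Type*} [NormedAddCommGroup F] [InnerProductSpace ℝ F]
    [CompleteSpace F] {f : F → ℝ} {x : F} (h : IsLocalExtr f x) : gradient f x = 0 := by
  rw [gradient, h.fderiv_eq_zero, map_zero]

theorem gradient_lower_bound_in_tube_general
    {n : ℕ} (g : EuclideanSpace ℝ (Fin n) → ℝ) (L : ℝ) (hL : 0 < L)
    (hLip : ∀ a b, |g a - g b| ≤ L * ‖a - b‖)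
    (Z : Set (EuclideanSpace ℝ (Fin n))) (hZ : Z.Nonempty)
    (hZ0 : Z ⊆ {x | g x = 0})
    (δ lam : ℝ) (hδ : 0 < δ) (hlamδ : lam ≤ δ / (2 * L))
    (M : Set (EuclideanSpace ℝ (Fin n)))
    (hM : M = {x | infDist x Z ≤ lam / 2})
    (gk : ℕ → EuclideanSpace ℝ (Fin n) → ℝ)
    (hnondeg : ∀ k, ∀ x ∈ M, δ ≤ ‖gradient (gk k) x‖ + |gk k x|)
    (hconv : ∀ ε > 0, ∃ k₀ : ℕ, ∀ k ≥ k₀, ∀ x ∈ M, |gk k x - g x| < ε) :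
    ∃ k₀ : ℕ, ∀ k ≥ k₀,
      (∀ x ∈ M, δ / 2 ≤ ‖gradient (gk k) x‖) ∧
      (∀ x ∈ interior M, ¬ IsLocalExtr (gk k) x) := by
  have hLlam : L * lam ≤ δ / 2 := by
    rw [le_div_iff₀ (by positivity)] at hlamδ
    linarith
  have hg_small : ∀ x ∈ M, |g x| ≤ δ / 4 := by
    intro x hx
    have hdist : infDist x Z ≤ lam / 2 := by rwa [hM] at hx
    calc |g x| ≤ L * infDist x Z :=
          abs_le_mul_infDist_of_eq_zero_on hL (by simpa [dist_eq_norm] using hLip) hZ hZ0 x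
      _ ≤ L * (lam / 2) := by gcongr
      _ ≤ δ / 4 := by linarith
  obtain ⟨k₀, hk₀⟩ := hconv (δ / 4) (by positivity)
  refine ⟨k₀, fun k hk => ?_⟩
  have hgrad : ∀ x ∈ M, δ / 2 ≤ ‖gradient (gk k) x‖ := fun x hx => by
    linarith [hnondeg k x hx, hk₀ k hk x hx, hg_small x hx, abs_sub_abs_le_abs_sub (gk k x) (g x)]
  refine ⟨hgrad, fun x hx hextr => ?_⟩
  have := hgrad x (interior_subset hx)
  rw [hextr.gradient_eq_zero, norm_zero] at this
  linarith

/-- The key estimate (3.14) in Lemma 3.7: if `g` is `L`-Lipschitz, `Z ⊆ {g = 0}` is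
nonempty, `0 < λ ≤ δ/(2L)`, `M` is the closed `λ/2`-tube around `Z`, the `C¹` functions
`g_k` satisfy `‖∇g_k‖ + |g_k| ≥ δ` on `M` and converge uniformly to `g` on `M`, then
eventually `‖∇g_k‖ ≥ δ/2` on `M`; in particular `g_k` has no local extremum point in
the interior of `M`. -/
theorem gradient_lower_bound_in_tube
    {n : ℕ} (g : EuclideanSpace ℝ (Fin n) → ℝ) (L : ℝ) (hL : 0 < L)
    (hLip : ∀ a b, |g a - g b| ≤ L * ‖a - b‖)
    (Z : Set (EuclideanSpace ℝ (Fin n))) (hZ : Z.Nonempty)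
    (hZ0 : Z ⊆ {x | g x = 0})
    (δ lam : ℝ) (hδ : 0 < δ) (hlam : 0 < lam) (hlamδ : lam ≤ δ / (2 * L))
    (M : Set (EuclideanSpace ℝ (Fin n)))
    (hM : M = {x | infDist x Z ≤ lam / 2})
    (gk : ℕ → EuclideanSpace ℝ (Fin n) → ℝ) (hgk : ∀ k, ContDiff ℝ 1 (gk k))
    (hnondeg : ∀ k, ∀ x ∈ M, δ ≤ ‖gradient (gk k) x‖ + |gk k x|)
    (hconv : ∀ ε > 0, ∃ k₀ : ℕ, ∀ k ≥ k₀, ∀ x ∈ M, |gk k x - g x| < ε) :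
    ∃ k₀ : ℕ, ∀ k ≥ k₀,
      (∀ x ∈ M, δ / 2 ≤ ‖gradient (gk k) x‖) ∧
      (∀ x ∈ interior M, ¬ IsLocalExtr (gk k) x) :=
  gradient_lower_bound_in_tube_general g L hL hLip Z hZ hZ0 δ lam hδ hlamδ M hM gk hnondeg hconv
end

section
/- Let K ⊆ ℝⁿ be compact, let U ⊇ K be open and let g : U → ℝ be continuously differentiable. Assume the set Z := {x ∈ K : g(x) = 0} is nonempty, is contained in the interior of K, and ∇g(x) ≠ 0 for every x ∈ Z. Let (g_k) be continuous functions on K with sup_{x ∈ K} |g_k(x) − g(x)| → 0 as k → ∞, and let (z_k) be reals with z_k → 0. Then the sets A_k := {x ∈ K : g_k(x) = z_k} are nonempty for all sufficiently large k, and the Hausdorff distance between A_k and Z tends to 0 as k → ∞. -/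
open Set Topology Filter Metric

section helpers


variable {E : Type*} [NormedAddCommGroup E] [NormedSpace ℝ E]

lemma sign_points {K U : Set E} (hU : IsOpen U) (hKU : K ⊆ U)
    {g : E → ℝ} (hg : ContDiffOn ℝ 1 g U)
    {z : E} (hzK : z ∈ K) (hz0 : g z = 0)
    (hzint : z ∈ interior K) (hL : fderiv ℝ g z ≠ 0)
    {δ : ℝ} (hδ : 0 < δ) :
    ∃ p q : E, 0 < g p ∧ g q < 0 ∧ segment ℝ q p ⊆ K ∩ closedBall z δ := by
  obtain ⟨r, hr, hball⟩ : ∃ r > 0, ball z r ⊆ interior K :=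
    Metric.isOpen_iff.mp isOpen_interior z hzint
  set ρ := min r δ with hρdef
  have hρ : 0 < ρ := lt_min hr hδ
  have hballK : ball z ρ ⊆ K ∩ closedBall z δ := fun x hx =>
    ⟨interior_subset (hball (ball_subset_ball (min_le_left _ _) hx)),
     ball_subset_closedBall (ball_subset_ball (min_le_right _ _) hx)⟩
  have hdiff : DifferentiableAt ℝ g z :=
    (hg.differentiableOn one_ne_zero).differentiableAt (hU.mem_nhds (hKU hzK))
  set L := fderiv ℝ g z with hLdef
  obtain ⟨w, hw⟩ : ∃ w, L w ≠ 0 := by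
    by_contra h
    push_neg at h
    exact hL (ContinuousLinearMap.ext fun w => by simpa using h w)
  set v := (L w)⁻¹ • w with hv
  have hLv : L v = 1 := by
    simp [hv, map_smul, inv_mul_cancel₀ hw]
  set f : ℝ → ℝ := fun t => g (z + t • v) with hf
  have hφ : HasDerivAt (fun t : ℝ => z + t • v) v 0 := by
    simpa using ((hasDerivAt_id (0:ℝ)).smul_const v).const_add z
  have hfd : HasDerivAt f 1 0 := by
    have h2 : HasFDerivAt g L (z + (0:ℝ) • v) := by
      simpa using hdiff.hasFDerivAt
    have := h2.comp_hasDerivAt 0 hφ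
    rw [hLv] at this
    exact this
  have hslope : Tendsto (slope f 0) (𝓝[≠] 0) (𝓝 1) :=
    hasDerivAt_iff_tendsto_slope.mp hfd
  have h1 : ∀ᶠ t in 𝓝[≠] (0:ℝ), 0 < slope f 0 t :=
    hslope.eventually (eventually_gt_nhds one_pos)
  have h2 : ∀ᶠ t in 𝓝[≠] (0:ℝ), z + t • v ∈ ball z ρ := by
    have hc : Tendsto (fun t : ℝ => z + t • v) (𝓝 0) (𝓝 z) := by
      have := hφ.continuousAt.tendsto
      simpa using this
    exact (hc.eventually (ball_mem_nhds z hρ)).filter_mono nhdsWithin_le_nhds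
  obtain ⟨S, hS, hSsub⟩ := (h1.and h2).exists_mem
  obtain ⟨η, hη, hηsub⟩ := Metric.mem_nhdsWithin_iff.mp hS
  set t := η / 2 with ht
  have htpos : 0 < t := by positivity
  have hmem : ∀ s : ℝ, s ≠ 0 → |s| < η → (0 < slope f 0 s ∧ z + s • v ∈ ball z ρ) := by
    intro s hs hsl
    exact hSsub _ (hηsub ⟨by simpa [Real.dist_eq] using hsl, hs⟩)
  have hPt := hmem t htpos.ne' (by rw [abs_of_pos htpos]; simpa [ht] using half_lt_self hη)
  have hPnt := hmem (-t) (neg_ne_zero.mpr htpos.ne')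
    (by rw [abs_neg, abs_of_pos htpos]; simpa [ht] using half_lt_self hη)
  set p := z + t • v with hp
  set q := z + (-t) • v with hq
  have hf0 : f 0 = 0 := by simp [hf, hz0]
  have hslp : slope f 0 t = f t / t := by
    rw [slope_def_field, hf0, sub_zero, sub_zero]
  have hslq : slope f 0 (-t) = f (-t) / (-t) := by
    rw [slope_def_field, hf0, sub_zero, sub_zero]
  have hgp : 0 < g p := by
    have := hPt.1
    rw [hslp] at this
    have : 0 < f t := by
      have h := mul_pos this htpos
      rwa [div_mul_cancel₀ _ htpos.ne'] at h
    simpa [hf, hp] using this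
  have hgq : g q < 0 := by
    have h0 := hPnt.1
    rw [hslq] at h0
    have : f (-t) < 0 := by
      by_contra hcon
      push_neg at hcon
      have : f (-t) / (-t) ≤ 0 := div_nonpos_iff.mpr (Or.inl ⟨hcon, by linarith⟩)
      linarith
    simpa [hf, hq] using this
  exact ⟨p, q, hgp, hgq, fun x hx =>
    hballK ((convex_ball z ρ).segment_subset hPnt.2 hPt.2 hx)⟩

/-- IVT along a segment contained in K. -/
lemma exists_level_on_segment {K : Set E} {h : E → ℝ} (hc : ContinuousOn h K)
    {p q : E} (hseg : segment ℝ q p ⊆ K) {ζ : ℝ}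
    (hq : h q ≤ ζ) (hp : ζ ≤ h p) :
    ∃ x ∈ segment ℝ q p, h x = ζ := by
  set γ : ℝ → E := fun s => q + s • (p - q) with hγ
  have hγseg : ∀ s ∈ Icc (0:ℝ) 1, γ s ∈ segment ℝ q p := by
    intro s hs
    rw [segment_eq_image']
    exact ⟨s, hs, rfl⟩
  have hγc : ContinuousOn (h ∘ γ) (Icc 0 1) := by
    refine hc.comp ?_ fun s hs => hseg (hγseg s hs)
    exact (continuous_const.add (continuous_id.smul continuous_const)).continuousOn
  have hivt := intermediate_value_Icc (by norm_num : (0:ℝ) ≤ 1) hγc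
  have hζ : ζ ∈ Icc ((h ∘ γ) 0) ((h ∘ γ) 1) := by
    constructor <;> simp [hγ, hq, hp]
  obtain ⟨s, hs, hsx⟩ := hivt hζ
  exact ⟨γ s, hγseg s hs, hsx⟩

lemma approx_near {K U : Set E} (hK : IsCompact K) (hU : IsOpen U) (hKU : K ⊆ U)
    {g : E → ℝ} (hg : ContDiffOn ℝ 1 g U)
    (hZint : {x ∈ K | g x = 0} ⊆ interior K)
    (hgrad : ∀ x ∈ {x ∈ K | g x = 0}, fderiv ℝ g x ≠ 0)
    {δ : ℝ} (hδ : 0 < δ) :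
    ∃ c > 0, ∀ h : E → ℝ, ContinuousOn h K → (∀ x ∈ K, |h x - g x| < c) →
      ∀ ζ : ℝ, |ζ| < c → ∀ z ∈ K, g z = 0 → ∃ x ∈ K, h x = ζ ∧ dist z x ≤ δ := by
  set Z := {x ∈ K | g x = 0} with hZdef
  have hgc : ContinuousOn g K := (hg.continuousOn).mono hKU
  have hZclosed : IsClosed Z := by
    have : Z = K ∩ g ⁻¹' {0} := by ext x; simp [hZdef]
    rw [this]
    exact hgc.preimage_isClosed_of_isClosed hK.isClosed isClosed_singleton
  have hZc : IsCompact Z := hK.of_isClosed_subset hZclosed fun x hx => hx.1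
  by_cases hZe : Z.Nonempty
  · have hch : ∀ z ∈ Z, ∃ p q : E, 0 < g p ∧ g q < 0 ∧
        segment ℝ q p ⊆ K ∩ closedBall z (δ/2) :=
      fun z hz => sign_points hU hKU hg hz.1 hz.2 (hZint hz) (hgrad z hz) (half_pos hδ)
    choose! p q hgp hgq hseg using hch
    have hcov : Z ⊆ ⋃ z ∈ Z, ball z (δ/2) := fun z hz =>
      mem_biUnion hz (mem_ball_self (half_pos hδ))
    obtain ⟨S, hSZ, hSfin, hScov⟩ :=
      hZc.elim_finite_subcover_image (fun z _ => isOpen_ball) hcov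
    have hSne : S.Nonempty := by
      obtain ⟨z₀, hz₀⟩ := hZe
      obtain ⟨w, hw, -⟩ := mem_iUnion₂.mp (hScov hz₀)
      exact ⟨w, hw⟩
    set T := hSfin.toFinset with hT
    have hTne : T.Nonempty := by
      obtain ⟨w, hw⟩ := hSne
      exact ⟨w, hSfin.mem_toFinset.mpr hw⟩
    set c := (T.inf' hTne fun z => min (g (p z)) (-(g (q z)))) / 2 with hc
    have hcpos : 0 < c := by
      have : 0 < T.inf' hTne fun z => min (g (p z)) (-(g (q z))) := by
        rw [Finset.lt_inf'_iff]
        intro b hb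
        have hbZ : b ∈ Z := hSZ (hSfin.mem_toFinset.mp hb)
        exact lt_min (hgp b hbZ) (by linarith [hgq b hbZ])
      positivity
    refine ⟨c, hcpos, fun h hhc hhg ζ hζ z hzK hz0 => ?_⟩
    have hzZ : z ∈ Z := ⟨hzK, hz0⟩
    obtain ⟨w, hwS, hwz⟩ := mem_iUnion₂.mp (hScov hzZ)
    have hwZ : w ∈ Z := hSZ hwS
    have hwT : w ∈ T := hSfin.mem_toFinset.mpr hwS
    have hinf : 2 * c ≤ min (g (p w)) (-(g (q w))) := by
      have := Finset.inf'_le (fun z => min (g (p z)) (-(g (q z)))) hwT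
      rw [hc]; linarith
    have hpK : p w ∈ K := (hseg w hwZ (right_mem_segment ℝ _ _)).1
    have hqK : q w ∈ K := (hseg w hwZ (left_mem_segment ℝ _ _)).1
    have hhp : ζ ≤ h (p w) := by
      have h1 := abs_lt.mp (hhg (p w) hpK)
      have h2 : 2 * c ≤ g (p w) := le_trans hinf (min_le_left _ _)
      have h3 := (abs_lt.mp hζ).2
      linarith
    have hhq : h (q w) ≤ ζ := by
      have h1 := abs_lt.mp (hhg (q w) hqK)
      have h2 : 2 * c ≤ -(g (q w)) := le_trans hinf (min_le_right _ _)
      have h3 := (abs_lt.mp hζ).1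
      linarith
    obtain ⟨x, hxseg, hxζ⟩ := exists_level_on_segment hhc
      (fun y hy => (hseg w hwZ hy).1) hhq hhp
    refine ⟨x, (hseg w hwZ hxseg).1, hxζ, ?_⟩
    have hxw : dist x w ≤ δ/2 := (hseg w hwZ hxseg).2
    have hzw : dist z w < δ/2 := mem_ball.mp hwz
    calc dist z x ≤ dist z w + dist w x := dist_triangle _ _ _
      _ ≤ δ/2 + δ/2 := by rw [dist_comm w x]; linarith
      _ = δ := by ring
  · exact ⟨1, one_pos, fun h _ _ ζ _ z hzK hz0 => absurd ⟨hzK, hz0⟩ (fun hx => hZe ⟨z, hx⟩)⟩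

omit [NormedSpace ℝ E] in
lemma far_bound {K : Set E} (hK : IsCompact K) {g : E → ℝ} (hgc : ContinuousOn g K)
    (hZne : ({x ∈ K | g x = 0}).Nonempty) {ε : ℝ} (hε : 0 < ε) :
    ∃ m > 0, ∀ x ∈ K, |g x| < m → ∃ z ∈ K, g z = 0 ∧ dist x z ≤ ε := by
  set Z := {x ∈ K | g x = 0} with hZdef
  set F := K ∩ {x | ε ≤ infDist x Z} with hF
  have hFc : IsCompact F :=
    hK.inter_right (isClosed_le continuous_const (continuous_infDist_pt Z))
  have key : ∀ m : ℝ, 0 < m → (∀ x ∈ F, m ≤ |g x|) →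
      ∀ x ∈ K, |g x| < m → ∃ z ∈ K, g z = 0 ∧ dist x z ≤ ε := by
    intro m hm hmF x hxK hxg
    have hxF : x ∉ F := fun hxF => absurd (hmF x hxF) (not_le.mpr hxg)
    have : infDist x Z < ε := by
      by_contra hcon
      exact hxF ⟨hxK, not_lt.mp hcon⟩
    obtain ⟨z, hzZ, hzd⟩ := (Metric.infDist_lt_iff hZne).mp this
    exact ⟨z, hzZ.1, hzZ.2, le_of_lt hzd⟩
  by_cases hFne : F.Nonempty
  · obtain ⟨x₀, hx₀F, hmin⟩ := hFc.exists_isMinOn hFne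
      ((hgc.mono inter_subset_left).abs)
    have hm : 0 < |g x₀| := by
      rw [abs_pos]
      intro h0
      have : x₀ ∈ Z := ⟨hx₀F.1, h0⟩
      have := hx₀F.2
      simp only [mem_setOf_eq] at this
      rw [infDist_zero_of_mem ‹x₀ ∈ Z›] at this
      linarith
    exact ⟨|g x₀|, hm, key _ hm hmin⟩
  · refine ⟨1, one_pos, key 1 one_pos fun x hx => absurd ⟨x, hx⟩ hFne⟩

end helpers

/-- Lemma 3.6 (existence of approximating curves and Hausdorff–Pompeiu convergence):
if the zero set `Z` of `g` in the compact set `K` is nonempty, lies in the interior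
of `K`, the gradient of `g` does not vanish on `Z`, `g_k → g` uniformly on `K`, and
`z_k → 0`, then the level sets `A_k = {x ∈ K : g_k(x) = z_k}` are eventually nonempty
and converge to `Z` in the Hausdorff distance. -/
theorem level_sets_hausdorff_convergence
    {n : ℕ} (K U : Set (EuclideanSpace ℝ (Fin n))) (hK : IsCompact K)
    (hU : IsOpen U) (hKU : K ⊆ U)
    (g : EuclideanSpace ℝ (Fin n) → ℝ) (hg : ContDiffOn ℝ 1 g U)
    (hZne : ({x ∈ K | g x = 0}).Nonempty)
    (hZint : {x ∈ K | g x = 0} ⊆ interior K)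
    (hgrad : ∀ x ∈ {x ∈ K | g x = 0}, fderiv ℝ g x ≠ 0)
    (gk : ℕ → EuclideanSpace ℝ (Fin n) → ℝ) (hgkc : ∀ k, ContinuousOn (gk k) K)
    (hconv : ∀ ε > 0, ∃ k₀ : ℕ, ∀ k ≥ k₀, ∀ x ∈ K, |gk k x - g x| < ε)
    (zk : ℕ → ℝ) (hzk : Tendsto zk atTop (nhds 0)) :
    (∃ k₀ : ℕ, ∀ k ≥ k₀, ({x ∈ K | gk k x = zk k}).Nonempty) ∧
    Tendsto (fun k => hausdorffDist {x ∈ K | gk k x = zk k} {x ∈ K | g x = 0})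
      atTop (nhds 0) := by
  have hgc : ContinuousOn g K := hg.continuousOn.mono hKU
  have hzk' : ∀ c > 0, ∃ N : ℕ, ∀ k ≥ N, |zk k| < c := by
    intro c hc
    obtain ⟨N, hN⟩ := (Metric.tendsto_atTop.mp hzk) c hc
    exact ⟨N, fun k hk => by simpa [Real.dist_eq] using hN k hk⟩
  have main : ∀ δ > 0, ∃ N : ℕ, ∀ k ≥ N,
      (∀ z ∈ K, g z = 0 → ∃ x, (x ∈ K ∧ gk k x = zk k) ∧ dist z x ≤ δ) ∧
      (∀ x ∈ K, gk k x = zk k → ∃ z ∈ K, g z = 0 ∧ dist x z ≤ δ) := by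
    intro δ hδ
    obtain ⟨c₁, hc₁, H₁⟩ := approx_near hK hU hKU hg hZint hgrad hδ
    obtain ⟨m, hm, H₂⟩ := far_bound hK hgc hZne hδ
    set c := min c₁ (m/2) with hc
    have hcpos : 0 < c := lt_min hc₁ (by linarith)
    obtain ⟨N₁, hN₁⟩ := hconv c hcpos
    obtain ⟨N₂, hN₂⟩ := hzk' c hcpos
    refine ⟨max N₁ N₂, fun k hk => ⟨?_, ?_⟩⟩
    · intro z hzK hz0
      obtain ⟨x, hxK, hxv, hxd⟩ := H₁ (gk k) (hgkc k)
        (fun x hx => lt_of_lt_of_le (hN₁ k (le_trans (le_max_left _ _) hk) x hx) (min_le_left _ _))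
        (zk k) (lt_of_lt_of_le (hN₂ k (le_trans (le_max_right _ _) hk)) (min_le_left _ _))
        z hzK hz0
      exact ⟨x, ⟨hxK, hxv⟩, hxd⟩
    · intro x hxK hxv
      have h1 : |gk k x - g x| < m/2 :=
        lt_of_lt_of_le (hN₁ k (le_trans (le_max_left _ _) hk) x hxK) (min_le_right _ _)
      have h2 : |zk k| < m/2 :=
        lt_of_lt_of_le (hN₂ k (le_trans (le_max_right _ _) hk)) (min_le_right _ _)
      have hgxm : |g x| < m := by
        have htri : |g x| ≤ |g x - gk k x| + |gk k x| := by
          simpa using abs_sub_le (g x) (gk k x) 0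
        rw [abs_sub_comm, hxv] at htri
        rw [hxv] at h1
        linarith
      exact H₂ x hxK hgxm
  constructor
  · obtain ⟨N, hN⟩ := main 1 one_pos
    refine ⟨N, fun k hk => ?_⟩
    obtain ⟨z, hzK, hz0⟩ := hZne
    obtain ⟨x, hx, -⟩ := (hN k hk).1 z hzK hz0
    exact ⟨x, hx⟩
  · rw [Metric.tendsto_atTop]
    intro ε hε
    obtain ⟨N, hN⟩ := main (ε/2) (half_pos hε)
    refine ⟨N, fun k hk => ?_⟩
    have hle : hausdorffDist {x ∈ K | gk k x = zk k} {x ∈ K | g x = 0} ≤ ε/2 := by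
      apply hausdorffDist_le_of_mem_dist (le_of_lt (half_pos hε))
      · intro x hx
        obtain ⟨z, hzK, hz0, hzd⟩ := (hN k hk).2 x hx.1 hx.2
        exact ⟨z, ⟨hzK, hz0⟩, hzd⟩
      · intro z hz
        obtain ⟨x, hx, hxd⟩ := (hN k hk).1 z hz.1 hz.2
        exact ⟨x, hx, hxd⟩
    rw [Real.dist_eq, sub_zero, abs_of_nonneg hausdorffDist_nonneg]
    linarith
end

section
/- Let n ≥ 1, let z̄ ∈ ℝⁿ, and let g : ℝⁿ → ℝ be continuously differentiable in a neighborhood of z̄ with g(z̄) = 0 and ∇g(z̄) ≠ 0. Let r > 0, let (g_k) be continuous functions on the closed ball B̄(z̄, r) with sup_{B̄(z̄, r)} |g_k − g| → 0 as k → ∞, and let (z_k) be reals with z_k → 0. Then there exist an index k₀ and points x_k ∈ B̄(z̄, r) for k ≥ k₀ such that g_k(x_k) = z_k for all k ≥ k₀ and x_k → z̄ as k → ∞. -/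
open Set Topology Filter Metric

/-- The local existence step in the proof of Lemma 3.6: near a point `z̄` of the zero
level set of `g` where `∇g(z̄) ≠ 0`, the uniformly converging functions `g_k` attain
the levels `z_k → 0` at points `x_k` of the closed ball `B̄(z̄, r)` converging to `z̄`. -/
theorem local_existence_of_level_points
    {n : ℕ} (hn : 1 ≤ n) (zbar : EuclideanSpace ℝ (Fin n))
    (g : EuclideanSpace ℝ (Fin n) → ℝ)
    (U : Set (EuclideanSpace ℝ (Fin n))) (hU : U ∈ nhds zbar)
    (hg : ContDiffOn ℝ 1 g U)
    (hg0 : g zbar = 0) (hgrad : fderiv ℝ g zbar ≠ 0)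
    (r : ℝ) (hr : 0 < r)
    (gk : ℕ → EuclideanSpace ℝ (Fin n) → ℝ)
    (hgkc : ∀ k, ContinuousOn (gk k) (closedBall zbar r))
    (hconv : ∀ ε > 0, ∃ k₀ : ℕ, ∀ k ≥ k₀, ∀ x ∈ closedBall zbar r, |gk k x - g x| < ε)
    (zk : ℕ → ℝ) (hzk : Tendsto zk atTop (nhds 0)) :
    ∃ k₀ : ℕ, ∃ x : ℕ → EuclideanSpace ℝ (Fin n),
      (∀ k ≥ k₀, x k ∈ closedBall zbar r ∧ gk k (x k) = zk k) ∧
      Tendsto x atTop (nhds zbar) := by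
  classical
  set L := fderiv ℝ g zbar with hL
  -- differentiability at zbar
  have hdg : DifferentiableAt ℝ g zbar := ((hg.contDiffAt hU).differentiableAt one_ne_zero)
  have hgF : HasFDerivAt g L zbar := hdg.hasFDerivAt
  -- a direction with positive derivative
  obtain ⟨v0, hv0⟩ : ∃ v, L v ≠ 0 := by
    by_contra h
    push_neg at h
    exact hgrad (ContinuousLinearMap.ext h)
  obtain ⟨v, hv⟩ : ∃ v : EuclideanSpace ℝ (Fin n), 0 < L v := by
    rcases hv0.lt_or_gt with h | h
    · exact ⟨-v0, by simpa using h⟩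
    · exact ⟨v0, h⟩
  have hvne : v ≠ 0 := by
    intro h
    rw [h] at hv
    simp at hv
  have hvnorm : 0 < ‖v‖ := norm_pos_iff.2 hvne
  -- the directional function
  set φ : ℝ → ℝ := fun t => g (zbar + t • v) with hφdef
  have hφ0 : φ 0 = 0 := by simp [hφdef, hg0]
  have hφd : HasDerivAt φ (L v) 0 := by
    have hline : HasDerivAt (fun t : ℝ => zbar + t • v) v (0 : ℝ) := by
      simpa using ((hasDerivAt_id (0 : ℝ)).smul_const v).const_add zbar
    have h0 : zbar + (0 : ℝ) • v = zbar := by simp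
    exact hgF.comp_hasDerivAt_of_eq 0 hline (by simp)
  have hslope : Tendsto (slope φ 0) (𝓝[≠] 0) (𝓝 (L v)) :=
    hasDerivAt_iff_tendsto_slope.mp hφd
  have hslope_pos : ∀ᶠ t in 𝓝[≠] (0 : ℝ), 0 < slope φ 0 t :=
    hslope.eventually (eventually_gt_nhds hv)
  -- points of both signs arbitrarily close to zbar
  have hsigns : ∀ ρ > 0, ∃ p q : EuclideanSpace ℝ (Fin n), p ∈ closedBall zbar ρ ∧ q ∈ closedBall zbar ρ ∧
      0 < g p ∧ g q < 0 := by
    intro ρ hρ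
    have hsub : (𝓝[>] (0 : ℝ)) ≤ 𝓝[≠] 0 :=
      nhdsWithin_mono _ (fun t ht => ne_of_gt ht)
    have hsub' : (𝓝[<] (0 : ℝ)) ≤ 𝓝[≠] 0 :=
      nhdsWithin_mono _ (fun t ht => ne_of_lt ht)
    have hsmall : Ioo (0 : ℝ) (ρ / ‖v‖) ∈ 𝓝[>] (0 : ℝ) :=
      Ioo_mem_nhdsGT (div_pos hρ hvnorm)
    have hsmall' : Ioo (-(ρ / ‖v‖)) (0 : ℝ) ∈ 𝓝[<] (0 : ℝ) :=
      Ioo_mem_nhdsLT (neg_lt_zero.2 (div_pos hρ hvnorm))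
    obtain ⟨t₁, ht₁s, ht₁m⟩ := ((hslope_pos.filter_mono hsub).and
      (eventually_of_mem hsmall (fun t ht => ht))).exists
    obtain ⟨t₂, ht₂s, ht₂m⟩ := ((hslope_pos.filter_mono hsub').and
      (eventually_of_mem hsmall' (fun t ht => ht))).exists
    have ht₁pos : 0 < t₁ := ht₁m.1
    have ht₂neg : t₂ < 0 := ht₂m.2
    refine ⟨zbar + t₁ • v, zbar + t₂ • v, ?_, ?_, ?_, ?_⟩
    · rw [mem_closedBall, dist_eq_norm]
      have : ‖zbar + t₁ • v - zbar‖ = |t₁| * ‖v‖ := by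
        simp [norm_smul, abs_of_pos ht₁pos]
      rw [this, abs_of_pos ht₁pos]
      have := ht₁m.2
      calc t₁ * ‖v‖ ≤ (ρ / ‖v‖) * ‖v‖ := by nlinarith
        _ = ρ := by field_simp
    · rw [mem_closedBall, dist_eq_norm]
      have : ‖zbar + t₂ • v - zbar‖ = |t₂| * ‖v‖ := by
        simp [norm_smul]
      rw [this, abs_of_neg ht₂neg]
      have h2 := ht₂m.1
      calc -t₂ * ‖v‖ ≤ (ρ / ‖v‖) * ‖v‖ := by nlinarith
        _ = ρ := by field_simp
    · have hsl : slope φ 0 t₁ = φ t₁ / t₁ := by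
        simp [slope_def_field, hφ0]
      rw [hsl] at ht₁s
      have : 0 < φ t₁ := by
        have := mul_pos ht₁s ht₁pos
        rwa [div_mul_cancel₀ _ (ne_of_gt ht₁pos)] at this
      exact this
    · have hsl : slope φ 0 t₂ = φ t₂ / t₂ := by
        simp [slope_def_field, hφ0]
      rw [hsl] at ht₂s
      have : φ t₂ < 0 := by
        nlinarith [mul_pos ht₂s (neg_pos.2 ht₂neg),
          div_mul_cancel₀ (φ t₂) (ne_of_lt ht₂neg)]
      exact this
  -- Claim A: eventual existence of level points in small balls
  have claimA : ∀ ε > 0, ∃ k₀ : ℕ, ∀ k ≥ k₀,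
      ∃ x ∈ closedBall zbar (min r ε), gk k x = zk k := by
    intro ε hε
    have hρ : 0 < min r ε := lt_min hr hε
    obtain ⟨p, q, hp, hq, hgp, hgq⟩ := hsigns (min r ε) hρ
    set δ : ℝ := min (g p) (-g q) with hδdef
    have hδ : 0 < δ := lt_min hgp (by linarith)
    obtain ⟨k₁, hk₁⟩ := hconv (δ / 2) (by positivity)
    have hzk' : ∀ᶠ k in atTop, |zk k| < δ / 2 := by
      have := hzk (Iio_mem_nhds (show (0:ℝ) < δ / 2 by positivity))
      have h2 := hzk (Ioi_mem_nhds (show -(δ / 2) < (0:ℝ) by linarith))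
      filter_upwards [this, h2] with k ha hb
      rw [abs_lt]
      exact ⟨hb, ha⟩
    obtain ⟨k₂, hk₂⟩ := eventually_atTop.mp hzk'
    refine ⟨max k₁ k₂, fun k hk => ?_⟩
    have hk₁' := hk₁ k (le_trans (le_max_left _ _) hk)
    have hk₂' := hk₂ k (le_trans (le_max_right _ _) hk)
    have hball : closedBall zbar (min r ε) ⊆ closedBall zbar r :=
      closedBall_subset_closedBall (min_le_left _ _)
    have hpr : p ∈ closedBall zbar r := hball hp
    have hqr : q ∈ closedBall zbar r := hball hq
    have habs := abs_lt.mp hk₂'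
    have hgkp : zk k < gk k p := by
      have := abs_lt.mp (hk₁' p hpr)
      have hδp : δ ≤ g p := min_le_left _ _
      linarith
    have hgkq : gk k q < zk k := by
      have := abs_lt.mp (hk₁' q hqr)
      have hδq : δ ≤ -g q := min_le_right _ _
      linarith
    -- intermediate value theorem on the segment [q, p]
    have hseg : segment ℝ q p ⊆ closedBall zbar (min r ε) :=
      (convex_closedBall zbar (min r ε)).segment_subset hq hp
    have hconn : IsPreconnected (segment ℝ q p) :=
      (convex_segment q p).isPreconnected
    have hcont : ContinuousOn (gk k) (segment ℝ q p) :=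
      (hgkc k).mono (fun x hx => hball (hseg hx))
    have hivt := hconn.intermediate_value (left_mem_segment ℝ q p)
      (right_mem_segment ℝ q p) hcont
    have hmem : zk k ∈ Icc (gk k q) (gk k p) := ⟨le_of_lt hgkq, le_of_lt hgkp⟩
    obtain ⟨x, hxseg, hxeq⟩ := hivt hmem
    exact ⟨x, hseg hxseg, hxeq⟩
  -- the global starting index
  obtain ⟨k₀, hk₀⟩ := claimA r hr
  -- choose a minimizing point for each k ≥ k₀
  have key : ∀ k : ℕ, ∃ x : EuclideanSpace ℝ (Fin n), k ≥ k₀ →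
      x ∈ closedBall zbar r ∧ gk k x = zk k ∧
      ∀ y ∈ closedBall zbar r, gk k y = zk k → dist x zbar ≤ dist y zbar := by
    intro k
    by_cases hk : k ≥ k₀
    · set S : Set (EuclideanSpace ℝ (Fin n)) := {x | x ∈ closedBall zbar r ∧ gk k x = zk k} with hSdef
      have hSne : S.Nonempty := by
        obtain ⟨x, hx, hxeq⟩ := hk₀ k hk
        exact ⟨x, closedBall_subset_closedBall (min_le_left _ _) hx, hxeq⟩
      have hScl : IsClosed S := by
        have := (hgkc k).preimage_isClosed_of_isClosed isClosed_closedBall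
          (isClosed_singleton (x := zk k))
        convert this using 1
        exact hSdef
      have hScp : IsCompact S :=
        (isCompact_closedBall zbar r).of_isClosed_subset hScl (fun x hx => hx.1)
      obtain ⟨x, hxS, hxmin⟩ := hScp.exists_isMinOn hSne
        (continuous_dist.comp₂ continuous_id continuous_const).continuousOn
      exact ⟨x, fun _ => ⟨hxS.1, hxS.2, fun y hy hyeq => hxmin ⟨hy, hyeq⟩⟩⟩
    · exact ⟨zbar, fun h => absurd h hk⟩
  choose x hx using key
  refine ⟨k₀, x, fun k hk => ⟨(hx k hk).1, (hx k hk).2.1⟩, ?_⟩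
  rw [Metric.tendsto_atTop]
  intro ε hε
  obtain ⟨k₁, hk₁⟩ := claimA (ε / 2) (by positivity)
  refine ⟨max k₀ k₁, fun k hk => ?_⟩
  have hkk₀ : k ≥ k₀ := le_trans (le_max_left _ _) hk
  have hkk₁ : k ≥ k₁ := le_trans (le_max_right _ _) hk
  obtain ⟨y, hy, hyeq⟩ := hk₁ k hkk₁
  have hyr : y ∈ closedBall zbar r :=
    closedBall_subset_closedBall (min_le_left _ _) hy
  have hmin := (hx k hkk₀).2.2 y hyr hyeq
  have hyd : dist y zbar ≤ ε / 2 := by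
    have := mem_closedBall.mp hy
    calc dist y zbar ≤ min r (ε / 2) := this
      _ ≤ ε / 2 := min_le_right _ _
  calc dist (x k) zbar ≤ dist y zbar := hmin
    _ ≤ ε / 2 := hyd
    _ < ε := by linarith
end
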